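/- arXiv:2010.07294 — 4 statements merged into one kernel-verified Lean document; each statement's English description precedes it below -/
import Mathlib

section
/- For any m ∈ ℕ, k with 0 ≤ k ≤ m, and y ≥ m·2^m with S_m(y) = k, we have T^m(y) < y · 3^k / 2^(m-1) (as real numbers). -/
open Filter

/-- The (accelerated) Collatz map. -/
def T (n : ℕ) : ℕ := if n % 2 = 0 then n / 2 else (3 * n + 1) / 2

/-- Parity of the k-th iterate. -/
def X (k y : ℕ) : ℕ := T^[k] y % 2

/-- S_m(y) = X_0(y) + ... + X_m(y). -/
def S (m y : ℕ) : ℕ := ∑ k ∈ Finset.range (m + 1), X k y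

/-- Upper natural density. -/
noncomputable def ud (A : Set ℕ) : ℝ :=
  Filter.limsup (fun n => ((A ∩ Set.Iic n).ncard : ℝ) / n) Filter.atTop

/-- Positive upper density preserving. -/
def PDP (H : Set ℕ → Set ℕ) : Prop := ∀ A : Set ℕ, 0 < ud A → 0 < ud (H A)

/-- H_f for real-valued f. -/
def Hf (f : ℕ → ℝ) (A : Set ℕ) : Set ℕ :=
  {m | ∃ n ∈ A, ∃ k : ℕ, T^[k] n = m ∧ (m : ℝ) < f n}

/-- H_f for ℕ-valued f. -/
def HfN (f : ℕ → ℕ) (A : Set ℕ) : Set ℕ :=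
  {m | ∃ n ∈ A, ∃ k : ℕ, T^[k] n = m ∧ m < f n}

/-- S has natural density one. -/
def DensityOne (A : Set ℕ) : Prop :=
  Filter.Tendsto (fun n => ((A ∩ Set.Iic n).ncard : ℝ) / n) Filter.atTop (nhds 1)

lemma two_mul_T (n : ℕ) : 2 * T n = 3 ^ (n % 2) * n + n % 2 := by
  rcases Nat.mod_two_eq_zero_or_one n with h | h <;>
    simp only [T, h, ↓reduceIte, one_ne_zero, pow_zero, pow_one, one_mul, add_zero] <;> omega

/- Writing `2^j T^j(y) = 3^s y + c_j` with `s` the number of odd steps, the error term obeys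
`c_{j+1} = 3^x c_j + 2^j x` for the parity bit `x`, whence `c_j ≤ 3^s (2^j - 1)`. -/
lemma two_pow_mul_iterate_T_add_three_pow_le (y j : ℕ) :
    2 ^ j * T^[j] y + 3 ^ (∑ i ∈ Finset.range j, X i y)
      ≤ 3 ^ (∑ i ∈ Finset.range j, X i y) * (y + 2 ^ j) := by
  induction j with
  | zero => simp
  | succ j ih =>
    rw [Function.iterate_succ_apply', Finset.sum_range_succ]
    set s := ∑ i ∈ Finset.range j, X i y
    have hX : X j y = T^[j] y % 2 := rfl
    set x := X j y
    have hx : x ≤ 3 ^ (s + x) := by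
      have : x ≤ 1 := by omega
      exact this.trans (Nat.one_le_pow _ _ (by norm_num))
    calc 2 ^ (j + 1) * T (T^[j] y) + 3 ^ (s + x)
        = 2 ^ j * (2 * T (T^[j] y)) + 3 ^ (s + x) := by ring
      _ = 3 ^ x * (2 ^ j * T^[j] y + 3 ^ s) + 2 ^ j * x := by
          rw [two_mul_T, ← hX, pow_add]; ring
      _ ≤ 3 ^ x * (3 ^ s * (y + 2 ^ j)) + 2 ^ j * 3 ^ (s + x) := by gcongr
      _ = 3 ^ (s + x) * (y + 2 ^ (j + 1)) := by ring

theorem stmt4_general (m k y : ℕ) (hm : 1 ≤ m)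
    (hy : m * 2 ^ m ≤ y) (hS : S m y = k) :
    (T^[m] y : ℝ) < (y : ℝ) * 3 ^ k / 2 ^ (m - 1) := by
  have hs : ∑ i ∈ Finset.range m, X i y ≤ k := by
    rw [← hS, S, Finset.sum_range_succ]; omega
  have hpow : 2 ^ m ≤ y := le_trans (Nat.le_mul_of_pos_left _ hm) hy
  have hm2 : 2 ^ m = 2 * 2 ^ (m - 1) := by rw [← pow_succ']; congr 1; omega
  have hnat : 2 ^ (m - 1) * T^[m] y < 3 ^ k * y := by
    refine Nat.lt_of_mul_lt_mul_left (a := 2) ?_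
    calc 2 * (2 ^ (m - 1) * T^[m] y) = 2 ^ m * T^[m] y := by rw [hm2, mul_assoc]
      _ < 3 ^ (∑ i ∈ Finset.range m, X i y) * (y + 2 ^ m) := by
        have := two_pow_mul_iterate_T_add_three_pow_le y m
        have := Nat.one_le_pow (∑ i ∈ Finset.range m, X i y) 3 (by norm_num)
        omega
      _ ≤ 3 ^ k * (y + y) := by gcongr; norm_num
      _ = 2 * (3 ^ k * y) := by ring
  rw [lt_div_iff₀ (by positivity), mul_comm, mul_comm (y : ℝ)]
  exact_mod_cast hnat

theorem stmt4 (m k y : ℕ) (hm : 1 ≤ m) (hk : k ≤ m)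
    (hy : m * 2 ^ m ≤ y) (hS : S m y = k) :
    (T^[m] y : ℝ) < (y : ℝ) * 3 ^ k / 2 ^ (m - 1) :=
  stmt4_general m k y hm hy hS
end

section
/- If H_f is positive upper density preserving, then the set M_f = {y ∈ ℕ : ∃ k, T^k(y) < f(y)} has natural density 1. -/
open Filter

/-! A point outside `M_f` has no iterate below `f`, so `H_f` sends the complement of `M_f` to `∅`.
As `∅` has upper density `0` and `H_f` preserves positive upper density, the complement of `M_f`
has upper density `0`, which for a set of naturals means that `M_f` has density `1`. -/

open Topology

/-- `ud A` is the `limsup` of `countingRatio A`, and `DensityOne A` its convergence to `1`,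
definitionally. -/
noncomputable def countingRatio (A : Set ℕ) (n : ℕ) : ℝ := ((A ∩ Set.Iic n).ncard : ℝ) / n

lemma countingRatio_nonneg (A : Set ℕ) (n : ℕ) : 0 ≤ countingRatio A n := by
  unfold countingRatio; positivity

lemma countingRatio_le_two (A : Set ℕ) (n : ℕ) : countingRatio A n ≤ 2 := by
  rcases Nat.eq_zero_or_pos n with rfl | hn
  · simp [countingRatio]
  have hcard : (A ∩ Set.Iic n).ncard ≤ n + 1 :=
    (Set.ncard_le_ncard Set.inter_subset_right (Set.finite_Iic n)).trans_eq (Set.ncard_Iic_nat n)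
  have hn' : (1 : ℝ) ≤ n := by exact_mod_cast hn
  rw [countingRatio, div_le_iff₀ (by positivity)]
  calc ((A ∩ Set.Iic n).ncard : ℝ) ≤ n + 1 := by exact_mod_cast hcard
    _ ≤ 2 * n := by linarith

lemma countingRatio_add_compl (A : Set ℕ) (n : ℕ) :
    countingRatio A n + countingRatio Aᶜ n = ((n : ℝ) + 1) / n := by
  have hsplit := Set.ncard_inter_add_ncard_sdiff_eq_ncard (Set.Iic n) A (Set.finite_Iic n)
  rw [Set.ncard_Iic_nat, Set.inter_comm, Set.sdiff_eq, Set.inter_comm (Set.Iic n)] at hsplit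
  rw [countingRatio, countingRatio, ← add_div]
  exact_mod_cast congrArg (fun m : ℕ => (m : ℝ) / n) hsplit

lemma ud_empty : ud ∅ = 0 := by
  simp [ud]

lemma tendsto_countingRatio_zero_of_ud_nonpos {A : Set ℕ} (hA : ud A ≤ 0) :
    Tendsto (countingRatio A) atTop (𝓝 0) := by
  have hbdd : IsBoundedUnder (· ≤ ·) atTop (countingRatio A) :=
    isBoundedUnder_of ⟨2, countingRatio_le_two A⟩
  refine tendsto_order.2 ⟨fun a ha => ?_, fun a ha => ?_⟩
  · exact Eventually.of_forall fun n => ha.trans_le (countingRatio_nonneg A n)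
  · exact eventually_lt_of_limsup_lt (hA.trans_lt ha) hbdd

lemma densityOne_of_ud_compl_nonpos {A : Set ℕ} (hA : ud Aᶜ ≤ 0) : DensityOne A := by
  have hratio : Tendsto (fun n : ℕ => ((n : ℝ) + 1) / n) atTop (𝓝 1) := by
    simpa [add_comm] using tendsto_add_mul_div_add_mul_atTop_nhds (1 : ℝ) 0 1 one_ne_zero
  have hlim := hratio.sub (tendsto_countingRatio_zero_of_ud_nonpos hA)
  rw [sub_zero] at hlim
  refine hlim.congr fun n => ?_
  rw [← countingRatio_add_compl A n, add_sub_cancel_right, countingRatio]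

lemma ud_nonpos_of_PDP {H : Set ℕ → Set ℕ} (hH : PDP H) {A : Set ℕ} (hA : H A = ∅) : ud A ≤ 0 :=
  not_lt.1 fun hpos => (hH A hpos).ne' (by rw [hA, ud_empty])

lemma Hf_compl_eq_empty (f : ℕ → ℝ) : Hf f {y : ℕ | ∃ k : ℕ, (T^[k] y : ℝ) < f y}ᶜ = ∅ := by
  refine Set.eq_empty_of_forall_notMem ?_
  rintro m ⟨n, hn, k, rfl, hlt⟩
  exact hn ⟨k, hlt⟩

theorem stmt11 (f : ℕ → ℝ) (hf : PDP (Hf f)) :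
    DensityOne {y : ℕ | ∃ k : ℕ, (T^[k] y : ℝ) < f y} :=
  densityOne_of_ud_compl_nonpos (ud_nonpos_of_PDP hf (Hf_compl_eq_empty f))
end

section
/- The map H_f with f(y) = y/2 is positive upper density preserving: for every A ⊆ ℕ with d̄(A) > 0, the set H_f(A) = {T^k(n) : n ∈ A, T^k(n) < n/2} has positive upper density. -/
/-!
The parities of the first `M` steps of `n` depend only on `n mod 2^M`, and summed over these
residues the number `s` of odd steps satisfies `∑ (2s - M)² = M · 2^M`, so by Chebyshev at most
`25 · 2^M / M` residues have more than `3M/5` odd steps. For every other `n > 3^M` the bound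
`2^M T^M(n) ≤ 3^(3M/5) n + 3^M` gives `2 T^M(n) < n` once `M ≥ 62`. As `T^M` is at most
`2^M`-to-one, `|A ∩ [0,N]| ≤ 2^M |H_f(A) ∩ [0,N]| + 25N/M + O_M(1)`, and choosing
`25/M < d̄(A)` forces `d̄(H_f(A)) > 0`.
-/

open Filter

open Finset

lemma T_two_mul (n : ℕ) : T (2 * n) = n := by
  simp only [T]; split_ifs <;> omega

lemma T_two_mul_add_one (n : ℕ) : T (2 * n + 1) = 3 * n + 2 := by
  simp only [T]; split_ifs <;> omega

lemma two_mul_T_le (n : ℕ) : 2 * T n ≤ 3 ^ (n % 2) * n + 1 := by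
  rcases Nat.mod_two_eq_zero_or_one n with h | h <;> simp [T, h] <;> omega

lemma T_modEq {k a b : ℕ} (h : a ≡ b [MOD 2 ^ (k + 1)]) : T a ≡ T b [MOD 2 ^ k] := by
  have hpar : a % 2 = b % 2 := Nat.ModEq.of_dvd (dvd_pow_self 2 k.succ_ne_zero) h
  have half : ∀ c, c / 2 % 2 ^ k = c % 2 ^ (k + 1) / 2 := fun c => by
    rw [← Nat.mod_mul_right_div_self, pow_succ']
  unfold Nat.ModEq T
  split_ifs <;> try omega
  · rw [half, half, h]
  · rw [half, half, (h.mul_left 3).add_right 1]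

lemma X_succ (k n : ℕ) : X (k + 1) n = X k (T n) := by
  simp only [X, Function.iterate_succ_apply]

lemma X_le_one (k n : ℕ) : X k n ≤ 1 := Nat.le_of_lt_succ (Nat.mod_lt _ two_pos)

lemma X_eq_of_modEq {k a b : ℕ} (h : a ≡ b [MOD 2 ^ (k + 1)]) : X k a = X k b := by
  induction k generalizing a b with
  | zero => exact Nat.ModEq.of_dvd (by norm_num) h
  | succ k ih => rw [X_succ, X_succ]; exact ih (T_modEq h)

/-- `oddCount (m + 1) = S m`. -/
def oddCount (M n : ℕ) : ℕ := ∑ k ∈ range M, X k n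

lemma oddCount_succ (M n : ℕ) : oddCount (M + 1) n = oddCount M (T n) + n % 2 := by
  simp only [oddCount, sum_range_succ', X_succ]; rfl

lemma oddCount_le (M n : ℕ) : oddCount M n ≤ M :=
  (sum_le_card_nsmul _ _ 1 fun k _ => X_le_one k n).trans (by simp)

lemma oddCount_periodic (M : ℕ) : Function.Periodic (oddCount M) (2 ^ M) := fun _ =>
  sum_congr rfl fun _ hk =>
    X_eq_of_modEq (Nat.ModEq.of_dvd (pow_dvd_pow 2 (mem_range.1 hk)) (Nat.add_modEq_right))

lemma two_pow_mul_iterate_T_le (M n : ℕ) : 2 ^ M * T^[M] n ≤ 3 ^ oddCount M n * n + 3 ^ M := by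
  induction M generalizing n with
  | zero => simp [oddCount]
  | succ M ih =>
    have h3 : 3 ^ oddCount M (T n) ≤ 3 ^ M := Nat.pow_le_pow_right (by norm_num) (oddCount_le M _)
    calc 2 ^ (M + 1) * T^[M + 1] n = 2 * (2 ^ M * T^[M] (T n)) := by
          rw [Function.iterate_succ_apply]; ring
      _ ≤ 2 * (3 ^ oddCount M (T n) * T n + 3 ^ M) := by gcongr; exact ih _
      _ = 3 ^ oddCount M (T n) * (2 * T n) + 2 * 3 ^ M := by ring
      _ ≤ 3 ^ oddCount M (T n) * (3 ^ (n % 2) * n + 1) + 2 * 3 ^ M := by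
          gcongr; exact two_mul_T_le n
      _ ≤ 3 ^ oddCount (M + 1) n * n + 3 ^ (M + 1) := by
          rw [oddCount_succ, pow_add, pow_succ]; nlinarith

lemma two_mul_iterate_T_lt {M n : ℕ} (hodd : 8 * 3 ^ oddCount M n ≤ 2 ^ M) (hn : 3 ^ M < n) :
    2 * T^[M] n < n := by
  have h := two_pow_mul_iterate_T_le M n
  have h8 : 8 ≤ 2 ^ M := le_trans (Nat.le_mul_of_pos_right 8 (by positivity)) hodd
  have : 2 ^ M * (4 * (2 * T^[M] n)) < 2 ^ M * (2 * n) := by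
    calc 2 ^ M * (4 * (2 * T^[M] n)) = 8 * (2 ^ M * T^[M] n) := by ring
      _ ≤ 8 * 3 ^ oddCount M n * n + 8 * 3 ^ M := by nlinarith
      _ ≤ 2 ^ M * n + 8 * 3 ^ M := by gcongr
      _ < 2 ^ M * n + 8 * n := by omega
      _ ≤ 2 ^ M * (2 * n) := by nlinarith
  have := Nat.lt_of_mul_lt_mul_left this
  omega

lemma sum_range_two_mul {β : Type*} [AddCommMonoid β] (f : ℕ → β) (n : ℕ) :
    ∑ y ∈ range (2 * n), f y = ∑ z ∈ range n, (f (2 * z) + f (2 * z + 1)) := by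
  induction n with
  | zero => simp
  | succ n ih =>
    rw [mul_add, mul_one, sum_range_succ, sum_range_succ, sum_range_succ, ih, add_assoc]

lemma sum_range_comp_mul_add {β : Type*} [AddCommMonoid β] {f : ℕ → β} {m : ℕ}
    (hf : Function.Periodic f m) {a : ℕ} (ha : a.Coprime m) (b : ℕ) :
    ∑ z ∈ range m, f (a * z + b) = ∑ y ∈ range m, f y := by
  rcases m.eq_zero_or_pos with rfl | hm
  · simp
  have hmaps : Set.MapsTo (fun z => (a * z + b) % m) (range m) (range m) :=
    fun z _ => mem_range.2 (Nat.mod_lt _ hm)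
  have hinj : Set.InjOn (fun z => (a * z + b) % m) (range m) := fun z hz w hw hzw =>
    (Nat.ModEq.cancel_left_of_coprime ha.symm <| Nat.ModEq.add_right_cancel' b hzw).eq_of_lt_of_lt
      (mem_range.1 hz) (mem_range.1 hw)
  refine sum_nbij (fun z => (a * z + b) % m) hmaps hinj
    (surjOn_of_injOn_of_card_le _ hmaps hinj le_rfl) fun z _ => (hf.map_mod_nat _).symm

/-- Halving the residues mod `2 ^ (M + 1)`: even `y = 2z` continues as `z`, odd `y = 2z + 1` as
`3z + 2`, and `z ↦ 3z + 2` permutes the residues mod `2 ^ M`. -/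
lemma sum_range_two_pow_succ_oddCount {β : Type*} [AddCommMonoid β] (g : ℕ → β) (M : ℕ) :
    ∑ y ∈ range (2 ^ (M + 1)), g (oddCount (M + 1) y) =
      ∑ y ∈ range (2 ^ M), (g (oddCount M y) + g (oddCount M y + 1)) := by
  have hodd : ∑ z ∈ range (2 ^ M), g (oddCount M (3 * z + 2) + 1) =
      ∑ y ∈ range (2 ^ M), g (oddCount M y + 1) :=
    sum_range_comp_mul_add (f := fun y => g (oddCount M y + 1))
      (fun y => congrArg (fun s => g (s + 1)) (oddCount_periodic M y))
      (Nat.Coprime.pow_right M (by norm_num)) 2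
  rw [pow_succ', sum_range_two_mul, sum_add_distrib, sum_add_distrib, ← hodd]
  simp only [oddCount_succ, T_two_mul, T_two_mul_add_one, Nat.mul_add_mod_self_left]
  simp

lemma sum_sq_two_mul_oddCount_sub (M : ℕ) :
    ∑ y ∈ range (2 ^ M), ((2 * oddCount M y : ℤ) - M) ^ 2 = M * 2 ^ M := by
  induction M with
  | zero => simp [oddCount]
  | succ M ih =>
    rw [sum_range_two_pow_succ_oddCount (fun s => (2 * (s : ℤ) - (M + 1 : ℕ)) ^ 2)]
    have hpair : ∀ s : ℕ, (2 * (s : ℤ) - (M + 1 : ℕ)) ^ 2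
        + (2 * ((s + 1 : ℕ) : ℤ) - (M + 1 : ℕ)) ^ 2 = 2 * (2 * (s : ℤ) - M) ^ 2 + 2 := fun s => by push_cast; ring
    simp only [hpair, sum_add_distrib, ← mul_sum, ih, sum_const, card_range, nsmul_eq_mul]
    push_cast; ring

lemma card_filter_oddCount_gt_mul_le (M : ℕ) :
    #{y ∈ range (2 ^ M) | 3 * M < 5 * oddCount M y} * M ≤ 25 * 2 ^ M := by
  set bad := {y ∈ range (2 ^ M) | 3 * M < 5 * oddCount M y}
  have hpt : ∀ y ∈ bad, (M : ℤ) ^ 2 ≤ 25 * ((2 * oddCount M y : ℤ) - M) ^ 2 := fun y hy => by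
    have : 3 * M < 5 * oddCount M y := (mem_filter.1 hy).2
    have : (M : ℤ) ≤ 5 * ((2 * oddCount M y : ℤ) - M) := by omega
    nlinarith
  have hchebyshev : (#bad * M * M : ℤ) ≤ 25 * (M * 2 ^ M) :=
    calc (#bad * M * M : ℤ) = #bad • (M : ℤ) ^ 2 := by rw [nsmul_eq_mul]; ring
      _ ≤ ∑ y ∈ bad, 25 * ((2 * oddCount M y : ℤ) - M) ^ 2 := card_nsmul_le_sum _ _ _ hpt
      _ ≤ ∑ y ∈ range (2 ^ M), 25 * ((2 * oddCount M y : ℤ) - M) ^ 2 :=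
          sum_le_sum_of_subset_of_nonneg (filter_subset _ _) fun _ _ _ => by positivity
      _ = 25 * (M * 2 ^ M) := by rw [← mul_sum, sum_sq_two_mul_oddCount_sub]
  rcases M.eq_zero_or_pos with rfl | hM
  · simp
  refine Nat.le_of_mul_le_mul_right ?_ hM
  have : (#bad * M * M : ℤ) ≤ (25 * 2 ^ M * M : ℕ) := by push_cast; linarith
  exact_mod_cast this

lemma eight_mul_three_pow_le_two_pow {M s : ℕ} (hM : 62 ≤ M) (hs : 5 * s ≤ 3 * M) :
    8 * 3 ^ s ≤ 2 ^ M := by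
  have hgrowth : ∀ k ≥ 62, 8 ^ 5 * 27 ^ k ≤ 32 ^ k := fun k hk => by
    induction k, hk using Nat.le_induction with
    | base => norm_num
    | succ k _ ih => rw [pow_succ, pow_succ]; omega
  refine (Nat.pow_le_pow_iff_left (by norm_num : 5 ≠ 0)).1 ?_
  calc (8 * 3 ^ s) ^ 5 = 8 ^ 5 * 3 ^ (5 * s) := by ring
    _ ≤ 8 ^ 5 * 3 ^ (3 * M) := by gcongr; norm_num
    _ ≤ 32 ^ M := by rw [pow_mul]; exact hgrowth M hM
    _ = (2 ^ M) ^ 5 := by rw [← pow_mul, mul_comm, pow_mul]; norm_num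

lemma card_le_two_mul_card_image_T (s : Finset ℕ) : #s ≤ 2 * #(s.image T) := by
  refine card_le_mul_card_image s 2 fun m _ => ?_
  calc #{n ∈ s | T n = m} ≤ #{2 * m, (2 * m - 1) / 3} := by
        refine card_le_card fun n hn => ?_
        have : T n = m := (mem_filter.1 hn).2
        simp only [T] at this
        simp only [mem_insert, mem_singleton]
        split_ifs at this <;> omega
    _ ≤ 2 := card_le_two

lemma card_le_two_pow_mul_card_image_iterate_T (M : ℕ) (s : Finset ℕ) :
    #s ≤ 2 ^ M * #(s.image T^[M]) := by
  induction M generalizing s with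
  | zero => simp
  | succ M ih =>
    calc #s ≤ 2 * #(s.image T) := card_le_two_mul_card_image_T s
      _ ≤ 2 * (2 ^ M * #((s.image T).image T^[M])) := by gcongr; exact ih _
      _ = 2 ^ (M + 1) * #(s.image T^[M + 1]) := by
          rw [image_image, Function.iterate_succ, pow_succ']; ring

lemma card_filter_mod_mem_le (q N : ℕ) (R : Finset ℕ) :
    #{n ∈ Iic N | n % q ∈ R} ≤ (N / q + 1) * #R := by
  have hinj : Set.InjOn (fun n => (n / q, n % q)) ({n ∈ Iic N | n % q ∈ R} : Finset ℕ) :=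
    fun a _ b _ hab => by
      simp only [Prod.mk.injEq] at hab
      rw [← Nat.div_add_mod a q, ← Nat.div_add_mod b q, hab.1, hab.2]
  calc #{n ∈ Iic N | n % q ∈ R} ≤ #(range (N / q + 1) ×ˢ R) := by
        refine card_le_card_of_injOn _ (fun n hn => ?_) hinj
        simp only [coe_filter, Set.mem_ofPred_eq, mem_Iic] at hn
        simp only [coe_product, coe_range, Set.mem_prod, Set.mem_Iio, mem_coe]
        exact ⟨Nat.lt_succ_of_le (Nat.div_le_div_right hn.1), hn.2⟩
    _ = (N / q + 1) * #R := by simp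

open scoped Classical in
lemma ncard_inter_Iic_eq_card_filter (A : Set ℕ) (N : ℕ) :
    (A ∩ Set.Iic N).ncard = #{n ∈ Iic N | n ∈ A} := by
  rw [← Set.ncard_coe_finset]
  congr 1
  ext n
  simp [and_comm]

open scoped Classical in
lemma card_filter_mem_Iic_le_Hf (A : Set ℕ) {M : ℕ} (hM : 62 ≤ M) (N : ℕ) :
    #{n ∈ Iic N | n ∈ A} ≤ 2 ^ M * #{m ∈ Iic N | m ∈ Hf (fun y => (y : ℝ) / 2) A}
      + (N / 2 ^ M + 1) * #{y ∈ range (2 ^ M) | 3 * M < 5 * oddCount M y} + (3 ^ M + 1) := by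
  set AN := {n ∈ Iic N | n ∈ A}
  set bad := {y ∈ range (2 ^ M) | 3 * M < 5 * oddCount M y}
  set drops := {n ∈ AN | 2 * T^[M] n < n}
  have hdrops : #drops ≤ 2 ^ M * #{m ∈ Iic N | m ∈ Hf (fun y => (y : ℝ) / 2) A} := by
    refine (card_le_two_pow_mul_card_image_iterate_T M drops).trans (Nat.mul_le_mul_left _ ?_)
    refine card_le_card fun m hm => ?_
    obtain ⟨n, hn, rfl⟩ := mem_image.1 hm
    obtain ⟨hnAN, hdrop⟩ := mem_filter.1 hn
    obtain ⟨hnN, hnA⟩ := mem_filter.1 hnAN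
    refine mem_filter.2 ⟨mem_Iic.2 ((mem_Iic.1 hnN).trans' (by omega)), n, hnA, M, rfl, ?_⟩
    have : (2 * T^[M] n : ℝ) < n := by exact_mod_cast hdrop
    linarith
  have hcover : AN ⊆ drops ∪ {n ∈ Iic N | n % 2 ^ M ∈ bad} ∪ range (3 ^ M + 1) := by
    intro n hn
    rw [mem_union, mem_union]
    by_cases hsmall : n < 3 ^ M + 1
    · exact Or.inr (mem_range.2 hsmall)
    by_cases hodd : 5 * oddCount M n ≤ 3 * M
    · exact Or.inl (Or.inl (mem_filter.2 ⟨hn,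
        two_mul_iterate_T_lt (eight_mul_three_pow_le_two_pow hM hodd) (by omega)⟩))
    · refine Or.inl (Or.inr (mem_filter.2 ⟨(mem_filter.1 hn).1,
        mem_filter.2 ⟨mem_range.2 (Nat.mod_lt _ (by positivity)), ?_⟩⟩))
      rw [(oddCount_periodic M).map_mod_nat]
      omega
  calc #AN ≤ #drops + #{n ∈ Iic N | n % 2 ^ M ∈ bad} + #(range (3 ^ M + 1)) :=
        (card_le_card hcover).trans <|
          (card_union_le _ _).trans (by gcongr; exact card_union_le _ _)
    _ ≤ _ := by rw [card_range]; gcongr; exact card_filter_mod_mem_le _ _ _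

lemma ncard_inter_Iic_le_Hf (A : Set ℕ) {M : ℕ} (hM : 62 ≤ M) (N : ℕ) :
    ((A ∩ Set.Iic N).ncard : ℝ) ≤ 2 ^ M * (Hf (fun y => (y : ℝ) / 2) A ∩ Set.Iic N).ncard
      + 25 / M * N + (2 ^ M + 3 ^ M + 1) := by
  classical
  set B := #{y ∈ range (2 ^ M) | 3 * M < 5 * oddCount M y}
  have hcount : ((A ∩ Set.Iic N).ncard : ℝ)
      ≤ 2 ^ M * (Hf (fun y => (y : ℝ) / 2) A ∩ Set.Iic N).ncard
        + ((N / 2 ^ M : ℕ) + 1) * B + (3 ^ M + 1) := by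
    rw [ncard_inter_Iic_eq_card_filter, ncard_inter_Iic_eq_card_filter]
    exact_mod_cast card_filter_mem_Iic_le_Hf A hM N
  have hMpos : (0 : ℝ) < M := by exact_mod_cast (by omega : 0 < M)
  have hBM : (B : ℝ) * M ≤ 25 * 2 ^ M := by exact_mod_cast card_filter_oddCount_gt_mul_le M
  have hBq : (B : ℝ) ≤ 2 ^ M := by
    exact_mod_cast (card_filter_le _ _).trans_eq (card_range _)
  have hdiv : ((N / 2 ^ M : ℕ) : ℝ) * B ≤ 25 / M * N := by
    calc ((N / 2 ^ M : ℕ) : ℝ) * B ≤ N / 2 ^ M * B := by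
          gcongr; exact_mod_cast Nat.cast_div_le
      _ = N / (2 ^ M * M) * (B * M) := by field_simp
      _ ≤ N / (2 ^ M * M) * (25 * 2 ^ M) := by gcongr
      _ = 25 / M * N := by field_simp
  linarith

lemma ncard_inter_Iic_le_succ (A : Set ℕ) (N : ℕ) : (A ∩ Set.Iic N).ncard ≤ N + 1 :=
  (Set.ncard_le_ncard Set.inter_subset_right (Set.finite_Iic N)).trans_eq (Set.ncard_Iic_nat N)

lemma ud_pos_of_ncard_le {A B : Set ℕ} {q ε C : ℝ} (hq : 0 < q) (hε : ε < ud A)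
    (h : ∀ N : ℕ, ((A ∩ Set.Iic N).ncard : ℝ) ≤ q * (B ∩ Set.Iic N).ncard + ε * N + C) :
    0 < ud B := by
  set δ := ud A - ε with hδ_def
  have hδ : 0 < δ := sub_pos.2 hε
  have hfreq : ∃ᶠ N : ℕ in atTop, ε + δ / 2 < ((A ∩ Set.Iic N).ncard : ℝ) / N :=
    frequently_lt_of_lt_limsup (isCoboundedUnder_le_of_le atTop fun _ => by positivity)
      (show ε + δ / 2 < ud A by linarith)
  have hlarge : ∀ᶠ N : ℕ in atTop, C ≤ δ / 4 * N :=
    (tendsto_natCast_atTop_atTop.const_mul_atTop (by positivity)).eventually_ge_atTop C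
  have hfreqB : ∃ᶠ N : ℕ in atTop, δ / (4 * q) ≤ ((B ∩ Set.Iic N).ncard : ℝ) / N := by
    refine (hfreq.and_eventually (hlarge.and (eventually_ge_atTop 1))).mono ?_
    rintro N ⟨hA, hC, hN⟩
    have hN : (0 : ℝ) < N := by exact_mod_cast hN
    rw [lt_div_iff₀ hN] at hA
    rw [div_le_div_iff₀ (by positivity) hN]
    nlinarith [h N]
  have hbdd : IsBoundedUnder (· ≤ ·) atTop fun N : ℕ => ((B ∩ Set.Iic N).ncard : ℝ) / N := by
    refine isBoundedUnder_of_eventually_le (a := 2) ?_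
    filter_upwards [eventually_ge_atTop 1] with N hN
    have hN' : (1 : ℝ) ≤ N := by exact_mod_cast hN
    rw [div_le_iff₀ (by positivity)]
    have : ((B ∩ Set.Iic N).ncard : ℝ) ≤ N + 1 := by exact_mod_cast ncard_inter_Iic_le_succ B N
    linarith
  exact (by positivity : 0 < δ / (4 * q)).trans_le (le_limsup_of_frequently_le hfreqB hbdd)

theorem stmt14 : PDP (Hf (fun y => (y : ℝ) / 2)) := by
  intro A hA
  obtain ⟨K, hK⟩ := exists_nat_gt (25 / ud A)
  set M := max K 62
  have hM : 25 / (M : ℝ) < ud A := by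
    have hK' : (K : ℝ) ≤ M := by exact_mod_cast le_max_left K 62
    rw [div_lt_iff₀ (by positivity)]
    rw [div_lt_iff₀ hA] at hK
    nlinarith
  exact ud_pos_of_ncard_le (by positivity) hM (ncard_inter_Iic_le_Hf A (le_max_right K 62))
end

section
/- If H_f with f(y) = y^c is positive upper density preserving for some fixed 0 < c < 1, then H_g with g(y) = y^{c'} is positive upper density preserving for every c' > 0, since iterates of f eventually lie below g on all sufficiently large y and H respects composition and pointwise comparison. -/
/-!
Choose `j` with `c ^ (j + 1) ≤ c'`. Composing `H_{y^a}` after `H_{y^b}` lands inside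
`H_{y^(b a)}`, so `(H_{y^c})^[j+1] A ⊆ H_{y^(c^(j+1))} A ⊆ H_{y^c'} A`; the left side has
positive upper density by iterating the hypothesis, and upper density is monotone.
-/

open Filter

lemma ncard_inter_Iic_div_le_two (A : Set ℕ) (n : ℕ) :
    ((A ∩ Set.Iic n).ncard : ℝ) / n ≤ 2 := by
  rcases Nat.eq_zero_or_pos n with rfl | hn
  · simp
  have hcard : ((A ∩ Set.Iic n).ncard : ℝ) ≤ n + 1 := by
    have := Set.ncard_le_ncard (Set.inter_subset_right (s := A)) (Set.finite_Iic n)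
    rw [Set.ncard_eq_toFinset_card' (Set.Iic n), Set.toFinset_Iic, Nat.card_Iic] at this
    exact_mod_cast this
  have hn1 : (1 : ℝ) ≤ n := by exact_mod_cast hn
  rw [div_le_iff₀ (by linarith)]
  linarith

lemma ud_mono {A B : Set ℕ} (h : A ⊆ B) : ud A ≤ ud B := by
  refine Filter.limsup_le_limsup (Eventually.of_forall fun n => ?_) ?_
    (Filter.isBoundedUnder_of ⟨2, ncard_inter_Iic_div_le_two B⟩)
  · refine div_le_div_of_nonneg_right ?_ (Nat.cast_nonneg n)
    exact_mod_cast Set.ncard_le_ncard (Set.inter_subset_inter_left _ h)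
      ((Set.finite_Iic n).subset Set.inter_subset_right)
  · exact (Filter.isBoundedUnder_of ⟨0, fun n => by positivity⟩ :
      Filter.IsBoundedUnder (· ≥ ·) atTop _).isCoboundedUnder_le

lemma PDP.mono {H H' : Set ℕ → Set ℕ} (hH : PDP H) (hle : ∀ A, H A ⊆ H' A) : PDP H' :=
  fun A hA => (hH A hA).trans_le (ud_mono (hle A))

lemma PDP.iterate {H : Set ℕ → Set ℕ} (hH : PDP H) : ∀ j, PDP H^[j]
  | 0 => fun _ hA => hA
  | j + 1 => by
    rw [Function.iterate_succ']
    exact fun A hA => hH _ (hH.iterate j A hA)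

lemma Hf_subset_Hf_of_subset (f : ℕ → ℝ) {A B : Set ℕ} (h : A ⊆ B) : Hf f A ⊆ Hf f B := by
  rintro m ⟨n, hn, k, hk, hm⟩
  exact ⟨n, h hn, k, hk, hm⟩

lemma Hf_subset_Hf_of_le {f g : ℕ → ℝ} (h : f ≤ g) (A : Set ℕ) : Hf f A ⊆ Hf g A := by
  rintro m ⟨n, hn, k, hk, hm⟩
  exact ⟨n, hn, k, hk, hm.trans_le (h n)⟩

lemma Hf_rpow_subset_Hf_rpow {a b : ℝ} (ha : a ≠ 0) (hab : a ≤ b) (A : Set ℕ) :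
    Hf (fun y => (y : ℝ) ^ a) A ⊆ Hf (fun y => (y : ℝ) ^ b) A := by
  refine Hf_subset_Hf_of_le (fun n => ?_) A
  rcases Nat.eq_zero_or_pos n with rfl | hn
  · simpa [Real.zero_rpow ha] using Real.rpow_nonneg le_rfl b
  · exact Real.rpow_le_rpow_of_exponent_le (by exact_mod_cast hn) hab

lemma Hf_rpow_Hf_rpow_subset {a b : ℝ} (ha : 0 ≤ a) (A : Set ℕ) :
    Hf (fun y => (y : ℝ) ^ a) (Hf (fun y => (y : ℝ) ^ b) A) ⊆
      Hf (fun y => (y : ℝ) ^ (b * a)) A := by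
  rintro m ⟨n', ⟨n, hn, j, rfl, hn'⟩, k, rfl, hm⟩
  refine ⟨n, hn, k + j, Function.iterate_add_apply T k j n, ?_⟩
  calc _ < (T^[j] n : ℝ) ^ a := hm
    _ ≤ ((n : ℝ) ^ b) ^ a := Real.rpow_le_rpow (by positivity) hn'.le ha
    _ = (n : ℝ) ^ (b * a) := (Real.rpow_mul (Nat.cast_nonneg n) b a).symm

lemma Hf_rpow_iterate_subset {c : ℝ} (hc : 0 ≤ c) (j : ℕ) (A : Set ℕ) :
    (Hf (fun y => (y : ℝ) ^ c))^[j + 1] A ⊆ Hf (fun y => (y : ℝ) ^ c ^ (j + 1)) A := by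
  induction j with
  | zero => simp
  | succ j ih =>
    rw [Function.iterate_succ_apply', pow_succ]
    exact (Hf_subset_Hf_of_subset _ ih).trans (Hf_rpow_Hf_rpow_subset hc A)

theorem stmt17 (c : ℝ) (hc0 : 0 < c) (hc1 : c < 1)
    (h : PDP (Hf (fun y => (y : ℝ) ^ c))) :
    ∀ c' : ℝ, 0 < c' → PDP (Hf (fun y => (y : ℝ) ^ c')) := by
  intro c' hc'
  obtain ⟨j, hj⟩ := exists_pow_lt_of_lt_one hc' hc1
  have hexp : c ^ (j + 1) ≤ c' := (pow_le_pow_of_le_one hc0.le hc1.le j.le_succ).trans hj.le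
  refine (h.iterate (j + 1)).mono fun A => ?_
  exact (Hf_rpow_iterate_subset hc0.le j A).trans
    (Hf_rpow_subset_Hf_rpow (pow_pos hc0 _).ne' hexp A)
end
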